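/- Let f̃ : ℝ^d → {0,1} be a measurable function, fix x ∈ ℝ^d, and set p = μ_x(f̃⁻¹{1}). Suppose 1/2 < p < 1. Then for every δ ∈ ℝ^d with ‖δ‖₂ < R, where R = (σ/2)·(Φ⁻¹(p) − Φ⁻¹(1−p)), one has μ_{x+δ}(f̃⁻¹{1}) > 1/2; in particular the smoothed binary classifier g̃, defined by g̃(y) = 1 if μ_y(f̃⁻¹{1}) > 1/2 and g̃(y) = 0 otherwise, satisfies g̃(x+δ) = 1. -/

import Mathlib

/-!
The likelihood ratio of `N(x + δ, σ²I)` against `N(x, σ²I)` is an increasing function of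
`⟪δ, z⟫`. Hence (Neyman–Pearson) among all sets of `N(x, σ²I)`-mass `p`, the half-space
`{⟪δ, z⟫ ≤ β}` has the least `N(x + δ, σ²I)`-mass. Projecting onto `δ / ‖δ‖` turns both Gaussians
into real ones, so that mass is `Φ(Φ⁻¹(p) - ‖δ‖ / σ)`, and by the symmetry `Φ⁻¹(1 - p) = -Φ⁻¹(p)`
it exceeds `1/2` exactly when `‖δ‖ < σ/2 · (Φ⁻¹(p) - Φ⁻¹(1 - p))`.
-/

open MeasureTheory ProbabilityTheory
open scoped RealInnerProductSpace

/-- `Phi` : cumulative distribution function of the standard real Gaussian N(0,1). -/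
noncomputable def Phi : ℝ → ℝ := fun t => ((gaussianReal 0 1) (Set.Iic t)).toReal

/-- `PhiInv` : the standard Gaussian quantile function, inverse of `Phi` on (0,1). -/
noncomputable def PhiInv : ℝ → ℝ := Function.invFun Phi

/-- `gaussPi d σ x` : the isotropic Gaussian measure on ℝ^d with mean `x` and covariance σ²I,
i.e. the product measure whose i-th factor is the real Gaussian with mean `x i`, variance σ². -/
noncomputable def gaussPi (d : ℕ) (σ : ℝ) (x : EuclideanSpace ℝ (Fin d)) :
    Measure (EuclideanSpace ℝ (Fin d)) :=
  (Measure.pi fun i => gaussianReal (x i) ⟨σ ^ 2, sq_nonneg σ⟩).map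
    (MeasurableEquiv.toLp 2 (Fin d → ℝ))

open Filter Set Real
open scoped NNReal ENNReal

namespace ProbabilityTheory

lemma continuous_cdf (μ : Measure ℝ) [IsProbabilityMeasure μ] [NullSingletonClass μ] :
    Continuous (cdf μ) := by
  refine continuous_iff_continuousAt.2 fun a => ?_
  have h_atom : ENNReal.ofReal (cdf μ a - Function.leftLim (cdf μ) a) = 0 := by
    rw [← StieltjesFunction.measure_singleton, measure_cdf, measure_singleton]
  have h_left : Function.leftLim (cdf μ) a ≤ cdf μ a := (monotone_cdf μ).leftLim_le le_rfl
  rw [(monotone_cdf μ).continuousAt_iff_leftLim_eq_rightLim, StieltjesFunction.rightLim_eq]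
  rw [ENNReal.ofReal_eq_zero] at h_atom
  linarith

lemma gaussianReal_map_affine (m c : ℝ) :
    (gaussianReal 0 1).map (fun s => m + c * s) = gaussianReal m (‖c‖₊ ^ 2) := by
  have h_comp : (fun s => m + c * s) = (m + ·) ∘ (c * ·) := rfl
  rw [h_comp, ← Measure.map_map (measurable_const_add m) (measurable_const_mul c),
    gaussianReal_map_const_mul, gaussianReal_map_const_add]
  congr 1
  · ring
  · exact NNReal.eq (by simp)

lemma gaussianReal_add_eq_withDensity {v : ℝ≥0} (hv : v ≠ 0) (m c : ℝ) :
    gaussianReal (m + c) v = (gaussianReal m v).withDensity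
      (fun z => ENNReal.ofReal (exp ((c * (z - m) - c ^ 2 / 2) / v))) := by
  have hv' : (v : ℝ) ≠ 0 := NNReal.coe_ne_zero.2 hv
  rw [gaussianReal_of_var_ne_zero _ hv, gaussianReal_of_var_ne_zero _ hv,
    ← withDensity_mul _ (measurable_gaussianPDF m v) (by fun_prop)]
  congr 1
  ext z
  rw [Pi.mul_apply, gaussianPDF, gaussianPDF, ← ENNReal.ofReal_mul (gaussianPDFReal_nonneg _ _ _),
    gaussianPDFReal, gaussianPDFReal, mul_assoc _ (exp _), ← exp_add]
  congr 3
  field_simp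
  ring

lemma stdGaussian_map_inner {E : Type*} [NormedAddCommGroup E] [InnerProductSpace ℝ E]
    [FiniteDimensional ℝ E] [MeasurableSpace E] [BorelSpace E] {u : E} (hu : ‖u‖ = 1) :
    (stdGaussian E).map (fun z => ⟪u, z⟫) = gaussianReal 0 1 := by
  have h := IsGaussian.map_eq_gaussianReal (μ := stdGaussian E) (innerSL ℝ u)
  rw [integral_strongDual_stdGaussian, variance_dual_stdGaussian, innerSL_apply_norm, hu] at h
  simpa using h

end ProbabilityTheory

namespace MeasureTheory

lemma lintegral_pi_prod_eq_prod {ι : Type*} [Fintype ι] {X : ι → Type*}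
    [∀ i, MeasurableSpace (X i)] (μ : ∀ i, Measure (X i)) [∀ i, IsProbabilityMeasure (μ i)]
    {f : ∀ i, X i → ℝ≥0∞} (hf : ∀ i, Measurable (f i)) :
    ∫⁻ x, ∏ i, f i (x i) ∂Measure.pi μ = ∏ i, ∫⁻ y, f i y ∂μ i := by
  rw [lintegral_prod_eq_prod_lintegral_of_indepFun _ _
    (iIndepFun_pi fun i => (hf i).aemeasurable) fun i => (hf i).comp (measurable_pi_apply i)]
  exact Finset.prod_congr rfl fun i _ => (measurePreserving_eval μ i).lintegral_comp (hf i)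

lemma Measure.pi_withDensity {ι : Type*} [Fintype ι] {X : ι → Type*}
    [∀ i, MeasurableSpace (X i)] (μ : ∀ i, Measure (X i)) [∀ i, IsProbabilityMeasure (μ i)]
    {f : ∀ i, X i → ℝ≥0∞} (hf : ∀ i, Measurable (f i))
    [∀ i, SigmaFinite ((μ i).withDensity (f i))] :
    Measure.pi (fun i => (μ i).withDensity (f i))
      = (Measure.pi μ).withDensity (fun x => ∏ i, f i (x i)) := by
  classical
  refine Measure.pi_eq fun s hs => ?_
  have h_ind : (univ.pi s).indicator (fun x => ∏ i, f i (x i))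
      = fun x => ∏ i, (s i).indicator (f i) (x i) := by
    ext x
    simp only [indicator_apply, mem_univ_pi, Finset.prod_ite_zero, Finset.mem_univ, true_imp_iff]
  rw [withDensity_apply _ (.univ_pi hs), ← lintegral_indicator (.univ_pi hs), h_ind,
    lintegral_pi_prod_eq_prod μ fun i => (hf i).indicator (hs i)]
  exact Finset.prod_congr rfl fun i _ => by
    rw [lintegral_indicator (hs i), withDensity_apply _ (hs i)]

/-- Neyman–Pearson: integrate `1_H g + c 1_A ≤ 1_A g + c 1_H` against `μ`. -/
lemma withDensity_apply_le_of_threshold {α : Type*} [MeasurableSpace α] {μ : Measure α}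
    {g : α → ℝ≥0∞} {H A : Set α} (hH : MeasurableSet H) (hA : MeasurableSet A) {c : ℝ≥0∞}
    (hc : c ≠ ∞) (hg_le : ∀ z ∈ H, g z ≤ c) (hg_ge : ∀ z ∉ H, c ≤ g z) (hμ : μ H ≤ μ A)
    (hμA : μ A ≠ ∞) :
    μ.withDensity g H ≤ μ.withDensity g A := by
  have h_pt : ∀ z, H.indicator g z + A.indicator (fun _ => c) z
      ≤ A.indicator g z + H.indicator (fun _ => c) z := by
    intro z
    by_cases hzH : z ∈ H <;> by_cases hzA : z ∈ A <;> simp [hzH, hzA, hg_le, hg_ge]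
  have h_int : ∀ {S T : Set α}, MeasurableSet S → MeasurableSet T →
      ∫⁻ z, S.indicator g z + T.indicator (fun _ => c) z ∂μ = μ.withDensity g S + c * μ T :=
    fun hS hT => by
      rw [lintegral_add_right _ (measurable_const.indicator hT), lintegral_indicator hS,
        lintegral_indicator_const hT, withDensity_apply _ hS]
  refine (ENNReal.add_le_add_iff_right (ENNReal.mul_ne_top hc hμA)).1 ?_
  calc μ.withDensity g H + c * μ A
      = ∫⁻ z, H.indicator g z + A.indicator (fun _ => c) z ∂μ := (h_int hH hA).symm
    _ ≤ ∫⁻ z, A.indicator g z + H.indicator (fun _ => c) z ∂μ := lintegral_mono h_pt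
    _ = μ.withDensity g A + c * μ H := h_int hA hH
    _ ≤ μ.withDensity g A + c * μ A := by gcongr

end MeasureTheory

lemma Phi_eq_cdf : Phi = cdf (gaussianReal 0 1) := by
  ext t
  rw [cdf_eq_real]
  rfl

lemma continuous_Phi : Continuous Phi := by
  have := nullSingletonClass_gaussianReal (μ := 0) one_ne_zero
  rw [Phi_eq_cdf]
  exact continuous_cdf _

lemma strictMono_Phi : StrictMono Phi := by
  intro a b hab
  have hpos : 0 < gaussianReal 0 1 (Ioc a b) := by
    refine pos_iff_ne_zero.2 fun h => ?_
    have := gaussianReal_absolutelyContinuous' 0 one_ne_zero h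
    simp only [Real.volume_Ioc, ENNReal.ofReal_eq_zero] at this
    linarith
  rw [← measure_cdf (gaussianReal 0 1), StieltjesFunction.measure_Ioc, ENNReal.ofReal_pos,
    ← Phi_eq_cdf] at hpos
  linarith

lemma Phi_neg (t : ℝ) : Phi (-t) = 1 - Phi t := by
  have := nullSingletonClass_gaussianReal (μ := 0) one_ne_zero
  have h_symm : gaussianReal 0 1 (Iic (-t)) = gaussianReal 0 1 (Iic t)ᶜ := by
    conv_lhs => rw [← neg_zero, ← gaussianReal_map_neg]
    rw [Measure.map_apply measurable_neg measurableSet_Iic, compl_Iic]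
    simp only [neg_preimage, neg_Iic, neg_neg]
    exact measure_congr Ioi_ae_eq_Ici.symm
  rw [Phi, h_symm, prob_compl_eq_one_sub measurableSet_Iic,
    ENNReal.toReal_sub_of_le prob_le_one ENNReal.one_ne_top]
  rfl

lemma Phi_zero : Phi 0 = 1 / 2 := by
  have h := Phi_neg 0
  rw [neg_zero] at h
  linarith

lemma Phi_PhiInv {p : ℝ} (hp : p ∈ Ioo 0 1) : Phi (PhiInv p) = p := by
  refine Function.invFun_eq ?_
  obtain ⟨a, ha⟩ := ((Phi_eq_cdf ▸ tendsto_cdf_atBot _).eventually_lt_const hp.1).exists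
  obtain ⟨b, hb⟩ := ((Phi_eq_cdf ▸ tendsto_cdf_atTop _).eventually_const_lt hp.2).exists
  exact intermediate_value_univ a b continuous_Phi ⟨ha.le, hb.le⟩

lemma PhiInv_Phi (t : ℝ) : PhiInv (Phi t) = t :=
  Function.leftInverse_invFun strictMono_Phi.injective t

section gaussPi

variable {d : ℕ} {σ : ℝ}

/-- `gaussPi` writes its variance as an anonymous constructor, which instance search and `rw`
do not see through. -/
lemma gaussPi_eq (x : EuclideanSpace ℝ (Fin d)) : gaussPi d σ x =
    (Measure.pi fun i => gaussianReal (x i) (‖σ‖₊ ^ 2)).map (MeasurableEquiv.toLp 2 (Fin d → ℝ)) := by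
  unfold gaussPi
  congr! with i
  exact congrArg _ (NNReal.eq (show σ ^ 2 = ((‖σ‖₊ ^ 2 : ℝ≥0) : ℝ) by simp))

instance (x : EuclideanSpace ℝ (Fin d)) : IsProbabilityMeasure (gaussPi d σ x) := by
  rw [gaussPi_eq]
  exact Measure.isProbabilityMeasure_map (by fun_prop)

lemma gaussPi_eq_map_stdGaussian (x : EuclideanSpace ℝ (Fin d)) :
    gaussPi d σ x = (stdGaussian (EuclideanSpace ℝ (Fin d))).map (fun z => x + σ • z) := by
  have h_comp : (fun z => x + σ • z) ∘ WithLp.toLp 2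
      = MeasurableEquiv.toLp 2 (Fin d → ℝ) ∘ fun w i => x i + σ * w i := rfl
  rw [gaussPi_eq, ← map_pi_eq_stdGaussian, Measure.map_map (by fun_prop) (by fun_prop), h_comp,
    ← Measure.map_map (by fun_prop) (by fun_prop),
    Measure.pi_map_pi (f := fun i s => x i + σ * s) fun i => by fun_prop]
  simp only [gaussianReal_map_affine]

lemma gaussPi_setOf_inner_le (hσ : 0 < σ) {u : EuclideanSpace ℝ (Fin d)} (hu : ‖u‖ = 1)
    (y : EuclideanSpace ℝ (Fin d)) (β : ℝ) :
    (gaussPi d σ y {z | ⟪u, z⟫ ≤ β}).toReal = Phi ((β - ⟪u, y⟫) / σ) := by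
  have h_pre : (fun z => y + σ • z) ⁻¹' {z | ⟪u, z⟫ ≤ β}
      = (fun z => ⟪u, z⟫) ⁻¹' Iic ((β - ⟪u, y⟫) / σ) := by
    ext z
    simp only [mem_preimage, mem_ofPred_eq, mem_Iic, inner_add_right, real_inner_smul_right,
      le_div_iff₀ hσ]
    constructor <;> intro h <;> linarith
  rw [gaussPi_eq_map_stdGaussian, Measure.map_apply (by fun_prop)
    (measurableSet_le (by fun_prop) (by fun_prop)), h_pre,
    ← Measure.map_apply (by fun_prop) measurableSet_Iic, stdGaussian_map_inner hu]
  rfl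

lemma gaussPi_add_smul_setOf_inner_le (hσ : 0 < σ) {u : EuclideanSpace ℝ (Fin d)} (hu : ‖u‖ = 1)
    (x : EuclideanSpace ℝ (Fin d)) (r t : ℝ) :
    (gaussPi d σ (x + r • u) {z | ⟪u, z⟫ ≤ ⟪u, x⟫ + σ * t}).toReal = Phi (t - r / σ) := by
  rw [gaussPi_setOf_inner_le hσ hu, inner_add_right, real_inner_smul_right,
    real_inner_self_eq_norm_sq, hu]
  congr 1
  field_simp
  ring

lemma gaussPi_add_eq_withDensity (hσ : σ ≠ 0) (x δ : EuclideanSpace ℝ (Fin d)) :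
    gaussPi d σ (x + δ) = (gaussPi d σ x).withDensity
      (fun z => ENNReal.ofReal (exp ((⟪δ, z - x⟫ - ‖δ‖ ^ 2 / 2) / σ ^ 2))) := by
  have h_coord (i : Fin d) :=
    gaussianReal_add_eq_withDensity (v := ‖σ‖₊ ^ 2) (by simpa using hσ) (x i) (δ i)
  ext s hs
  have hs' := (MeasurableEquiv.toLp 2 (Fin d → ℝ)).measurable hs
  rw [gaussPi_eq, gaussPi_eq, Measure.map_apply (by fun_prop) hs]
  simp only [PiLp.add_apply, h_coord]
  rw [Measure.pi_withDensity _ (fun i => by fun_prop), withDensity_apply _ hs',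
    withDensity_apply _ hs, setLIntegral_map hs (by fun_prop) (by fun_prop)]
  refine setLIntegral_congr_fun hs' fun w _ => ?_
  rw [← ENNReal.ofReal_prod_of_nonneg fun i _ => (exp_pos _).le, ← exp_sum]
  congr 2
  simp only [PiLp.inner_apply, RCLike.inner_apply, conj_trivial, EuclideanSpace.norm_sq_eq,
    Real.norm_eq_abs, sq_abs, PiLp.sub_apply, NNReal.coe_pow, coe_nnnorm]
  rw [← Finset.sum_div, Finset.sum_sub_distrib, ← Finset.sum_div]
  congr 3 with i
  exact mul_comm _ _

lemma gaussPi_add_smul_setOf_inner_le_le (hσ : σ ≠ 0) (x u : EuclideanSpace ℝ (Fin d)) {r : ℝ}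
    (hr : 0 ≤ r) (β : ℝ) {A : Set (EuclideanSpace ℝ (Fin d))} (hA : MeasurableSet A)
    (h : gaussPi d σ x {z | ⟪u, z⟫ ≤ β} ≤ gaussPi d σ x A) :
    gaussPi d σ (x + r • u) {z | ⟪u, z⟫ ≤ β} ≤ gaussPi d σ (x + r • u) A := by
  have h_inner (z) : ⟪r • u, z - x⟫ = r * (⟪u, z⟫ - ⟪u, x⟫) := by
    rw [real_inner_smul_left, inner_sub_right]
  rw [gaussPi_add_eq_withDensity hσ]
  refine withDensity_apply_le_of_threshold (measurableSet_le (by fun_prop) (by fun_prop)) hA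
    (c := ENNReal.ofReal (exp ((r * (β - ⟪u, x⟫) - ‖r • u‖ ^ 2 / 2) / σ ^ 2)))
    ENNReal.ofReal_ne_top (fun z hz => ?_) (fun z hz => ?_) h (measure_ne_top _ _)
  all_goals
    simp only [mem_ofPred_eq, not_le] at hz
    rw [h_inner]
    gcongr

end gaussPi

/-- Binary-classification randomized smoothing certificate (Appendix C.2): if
`p = μ_x(f̃⁻¹{1}) ∈ (1/2, 1)`, then for every `δ` with `‖δ‖₂ < (σ/2)(Φ⁻¹(p) - Φ⁻¹(1-p))`,
`μ_{x+δ}(f̃⁻¹{1}) > 1/2`; in particular the smoothed binary classifier outputs `1` at `x + δ`. -/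
theorem binary_smoothing_certificate
    {d : ℕ} {σ : ℝ} (hσ : 0 < σ)
    (f : EuclideanSpace ℝ (Fin d) → Fin 2) (hf : Measurable f)
    (x : EuclideanSpace ℝ (Fin d)) (p : ℝ)
    (hpdef : p = (gaussPi d σ x (f ⁻¹' {1})).toReal)
    (hp : p ∈ Set.Ioo (1 / 2 : ℝ) 1) :
    ∀ δ : EuclideanSpace ℝ (Fin d),
      ‖δ‖ < σ / 2 * (PhiInv p - PhiInv (1 - p)) →
      1 / 2 < (gaussPi d σ (x + δ) (f ⁻¹' {1})).toReal ∧
      (fun y : EuclideanSpace ℝ (Fin d) =>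
          if 1 / 2 < (gaussPi d σ y (f ⁻¹' {1})).toReal then (1 : Fin 2) else 0) (x + δ) = 1 := by
  intro δ hδ
  set A := f ⁻¹' {1}
  suffices h_half : 1 / 2 < (gaussPi d σ (x + δ) A).toReal from ⟨h_half, if_pos h_half⟩
  obtain rfl | hδ0 := eq_or_ne δ 0
  · simpa [← hpdef] using hp.1
  set t := PhiInv p
  have ht : Phi t = p := Phi_PhiInv ⟨by linarith [hp.1], hp.2⟩
  have hδt : ‖δ‖ < σ * t := by
    rw [← ht, ← Phi_neg, PhiInv_Phi] at hδ
    linarith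
  set u := ‖δ‖⁻¹ • δ
  have hu : ‖u‖ = 1 := norm_smul_inv_norm hδ0
  have hδu : ‖δ‖ • u = δ := smul_inv_smul₀ (norm_ne_zero_iff.2 hδ0) δ
  set H := {z | ⟪u, z⟫ ≤ ⟪u, x⟫ + σ * t}
  have hH_x : gaussPi d σ x H = gaussPi d σ x A := by
    rw [← ENNReal.toReal_eq_toReal_iff' (measure_ne_top _ _) (measure_ne_top _ _), ← hpdef, ← ht]
    simpa using gaussPi_add_smul_setOf_inner_le hσ hu x 0 t
  have h_NP := gaussPi_add_smul_setOf_inner_le_le hσ.ne' x u (norm_nonneg δ) _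
    (hf (measurableSet_singleton 1)) hH_x.le
  rw [hδu] at h_NP
  calc 1 / 2 = Phi 0 := Phi_zero.symm
    _ < Phi (t - ‖δ‖ / σ) := strictMono_Phi (by rw [sub_pos, div_lt_iff₀ hσ]; linarith)
    _ = (gaussPi d σ (x + δ) H).toReal := by
      rw [← gaussPi_add_smul_setOf_inner_le hσ hu x ‖δ‖ t, hδu]
    _ ≤ (gaussPi d σ (x + δ) A).toReal := ENNReal.toReal_mono (measure_ne_top _ _) h_NP
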